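/- Suppose σ : ℂ → ℂ satisfies the quasi-periodicity σ(z + aᵢ) = -exp(āᵢ(z + aᵢ/2)) σ(z) for i = 1,2 and define Φ_k(r) = exp(z_k* z) σ(z - z_k) exp(-½|z_k|²) exp(-½|z|²), where z is the complex coordinate of r and z_k = -ik. Then Φ_k satisfies the magnetic translation boundary condition Φ_k(r + aᵢ) = -exp(½ i aᵢ×r) exp(i r_k × aᵢ) Φ_k(r), where r_k is the real vector with complex coordinate z_k and u×v denotes the 2D cross product. -/
import Mathlib


open Complex

/-- Complex coordinate `z = (x + iy)/√2` of `r = (x, y)`. -/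
noncomputable def zc (r : ℝ × ℝ) : ℂ := ((r.1 : ℂ) + (r.2 : ℂ) * Complex.I) / (Real.sqrt 2 : ℂ)

/-- 2D cross product `u × v = u_x v_y - u_y v_x`. -/
def cross (u v : ℝ × ℝ) : ℝ := u.1 * v.2 - u.2 * v.1

/-- `z_k = -ik` (complex coordinate of the Bloch momentum, rotated by `-i`). -/
noncomputable def zk (k : ℝ × ℝ) : ℂ := -Complex.I * zc k

/-- The real vector `r_k` whose complex coordinate is `z_k`. -/
def rk (k : ℝ × ℝ) : ℝ × ℝ := (k.2, -k.1)

/-- The torus lowest-Landau-level quantum Hall wavefunction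
`Φ_k(r) = exp(z_k* z) σ(z - z_k) exp(-½|z_k|²) exp(-½|z|²)`. -/
noncomputable def Phi (σ : ℂ → ℂ) (k r : ℝ × ℝ) : ℂ :=
  Complex.exp ((starRingEnd ℂ) (zk k) * zc r) * σ (zc r - zk k) *
    Complex.exp (-(Complex.normSq (zk k) : ℂ) / 2) *
    Complex.exp (-(Complex.normSq (zc r) : ℂ) / 2)

lemma zc_add (r s : ℝ × ℝ) : zc (r + s) = zc r + zc s := by
  simp only [zc, Prod.fst_add, Prod.snd_add]
  push_cast
  ring

lemma zc_rk (k : ℝ × ℝ) : zc (rk k) = zk k := by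
  simp only [zc, rk, zk]
  push_cast
  ring_nf
  rw [Complex.I_sq]
  ring

lemma sqrt2_sq : (Real.sqrt 2 : ℂ) * (Real.sqrt 2 : ℂ) = 2 := by
  norm_cast
  exact Real.mul_self_sqrt (by norm_num)

lemma cross_complex (u v : ℝ × ℝ) :
    (cross u v : ℂ) * Complex.I =
      (starRingEnd ℂ) (zc u) * zc v - zc u * (starRingEnd ℂ) (zc v) := by
  have hs : (Real.sqrt 2 : ℂ) ≠ 0 := by
    simpa using Real.sqrt_ne_zero'.2 (by norm_num : (0:ℝ) < 2)
  simp only [zc, cross, map_div₀, map_add, map_mul, Complex.conj_ofReal, Complex.conj_I]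
  push_cast
  field_simp
  linear_combination (↑u.1 * ↑v.2 - ↑u.2 * ↑v.1 : ℂ) * Complex.I * sqrt2_sq

/-- Quasi-periodicity of `σ` implies the magnetic translation boundary condition of `Φ_k`. -/
theorem Phi_magnetic_translation (σ : ℂ → ℂ) (A1 A2 : ℝ × ℝ)
    (harea : cross A1 A2 = 2 * Real.pi)
    (hσ : ∀ i ∈ ({A1, A2} : Set (ℝ × ℝ)), ∀ z : ℂ,
      σ (z + zc i) = -Complex.exp ((starRingEnd ℂ) (zc i) * (z + zc i / 2)) * σ z) :
    ∀ i ∈ ({A1, A2} : Set (ℝ × ℝ)), ∀ (k r : ℝ × ℝ),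
      Phi σ k (r + i) =
        -Complex.exp ((1 / 2) * Complex.I * (cross i r)) *
          Complex.exp (Complex.I * (cross (rk k) i)) * Phi σ k r := by
  intro i hi k r
  have hσ' := hσ i hi (zc r - zk k)
  have h1 : zc (r + i) - zk k = (zc r - zk k) + zc i := by rw [zc_add]; ring
  have hcr1 := cross_complex i r
  have hcr2 := cross_complex (rk k) i
  rw [zc_rk] at hcr2
  set a := zc i
  set z := zc r
  set w := zk k
  have key : (starRingEnd ℂ) w * (z + a) + (starRingEnd ℂ) a * ((z - w) + a / 2) +
      (-(Complex.normSq w : ℂ) / 2) + (-(Complex.normSq (z + a) : ℂ) / 2) =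
      (1 / 2) * Complex.I * (cross i r) + Complex.I * (cross (rk k) i) +
      ((starRingEnd ℂ) w * z + (-(Complex.normSq w : ℂ) / 2) +
        (-(Complex.normSq z : ℂ) / 2)) := by
    simp only [← Complex.mul_conj, map_add]
    linear_combination (-1 / 2 : ℂ) * hcr1 - hcr2
  calc Phi σ k (r + i)
      = Complex.exp ((starRingEnd ℂ) w * (z + a)) * σ ((z - w) + a) *
          Complex.exp (-(Complex.normSq w : ℂ) / 2) *
          Complex.exp (-(Complex.normSq (z + a) : ℂ) / 2) := by
        rw [Phi, h1, zc_add]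
    _ = -(Complex.exp ((starRingEnd ℂ) w * (z + a) + (starRingEnd ℂ) a * ((z - w) + a / 2) +
          (-(Complex.normSq w : ℂ) / 2) + (-(Complex.normSq (z + a) : ℂ) / 2)) *
          σ (z - w)) := by
        rw [hσ', Complex.exp_add, Complex.exp_add, Complex.exp_add]; ring
    _ = -(Complex.exp ((1 / 2) * Complex.I * (cross i r) + Complex.I * (cross (rk k) i) +
          ((starRingEnd ℂ) w * z + (-(Complex.normSq w : ℂ) / 2) +
            (-(Complex.normSq z : ℂ) / 2))) * σ (z - w)) := by rw [key]
    _ = -Complex.exp ((1 / 2) * Complex.I * (cross i r)) *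
          Complex.exp (Complex.I * (cross (rk k) i)) * Phi σ k r := by
        rw [Phi, Complex.exp_add, Complex.exp_add, Complex.exp_add, Complex.exp_add]; ring
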